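/- arXiv:math/0210213 — 3 statements merged into one kernel-verified Lean document; each statement's English description precedes it below -/
import Mathlib

section
/- With m, Δ the Khovanov structure maps and m_Φ, Δ_Φ the Lee deformation maps on A = ℚ𝟏 ⊕ ℚ𝐱, the identity m ∘ (m_Φ ⊗ id) + m_Φ ∘ (m ⊗ id) = m ∘ (id ⊗ m_Φ) + m_Φ ∘ (id ⊗ m) holds as maps A⊗A⊗A → A. -/
open TensorProduct

noncomputable section

abbrev A : Type := ℚ × ℚ

/-- The basis element `𝟏`. -/
def one1 : A := (1, 0)

/-- The basis element `𝐱`. -/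
def xx : A := (0, 1)

/-- Khovanov multiplication as a bilinear map:
`m(𝟏⊗𝟏)=𝟏, m(𝟏⊗𝐱)=m(𝐱⊗𝟏)=𝐱, m(𝐱⊗𝐱)=0`. -/
def mB : A →ₗ[ℚ] A →ₗ[ℚ] A :=
  LinearMap.mk₂ ℚ (fun p q => (p.1 * q.1, p.1 * q.2 + p.2 * q.1))
    (by intros m₁ m₂ n; simp [Prod.ext_iff]; constructor <;> ring)
    (by intros c m n; simp [Prod.ext_iff]; constructor <;> ring)
    (by intros m n₁ n₂; simp [Prod.ext_iff]; constructor <;> ring)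
    (by intros c m n; simp [Prod.ext_iff]; constructor <;> ring)

/-- `m : A ⊗ A → A`. -/
def mK : A ⊗[ℚ] A →ₗ[ℚ] A := TensorProduct.lift mB

/-- Khovanov comultiplication `Δ(𝟏)=𝟏⊗𝐱+𝐱⊗𝟏, Δ(𝐱)=𝐱⊗𝐱`. -/
def ΔK : A →ₗ[ℚ] A ⊗[ℚ] A :=
  (LinearMap.fst ℚ ℚ ℚ).smulRight (one1 ⊗ₜ[ℚ] xx + xx ⊗ₜ[ℚ] one1) +
    (LinearMap.snd ℚ ℚ ℚ).smulRight (xx ⊗ₜ[ℚ] xx)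

/-- Lee deformation multiplication as a bilinear map:
`m_Φ(𝟏⊗𝟏)=m_Φ(𝟏⊗𝐱)=m_Φ(𝐱⊗𝟏)=0, m_Φ(𝐱⊗𝐱)=𝟏`. -/
def mΦB : A →ₗ[ℚ] A →ₗ[ℚ] A :=
  LinearMap.mk₂ ℚ (fun p q => (p.2 * q.2, 0))
    (by intros m₁ m₂ n; simp [Prod.ext_iff]; ring)
    (by intros c m n; simp [Prod.ext_iff]; ring)
    (by intros m n₁ n₂; simp [Prod.ext_iff]; ring)
    (by intros c m n; simp [Prod.ext_iff]; ring)

/-- `m_Φ : A ⊗ A → A`. -/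
def mΦ : A ⊗[ℚ] A →ₗ[ℚ] A := TensorProduct.lift mΦB

/-- `Δ_Φ(𝟏)=0, Δ_Φ(𝐱)=𝟏⊗𝟏`. -/
def ΔΦ : A →ₗ[ℚ] A ⊗[ℚ] A :=
  (LinearMap.snd ℚ ℚ ℚ).smulRight (one1 ⊗ₜ[ℚ] one1)

/-- `m ∘ (m_Φ ⊗ id) + m_Φ ∘ (m ⊗ id) = m ∘ (id ⊗ m_Φ) + m_Φ ∘ (id ⊗ m)`
as maps `A ⊗ A ⊗ A → A`. -/
theorem stmt3 :
    mK ∘ₗ LinearMap.rTensor A mΦ + mΦ ∘ₗ LinearMap.rTensor A mK =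
      (mK ∘ₗ LinearMap.lTensor A mΦ + mΦ ∘ₗ LinearMap.lTensor A mK) ∘ₗ
        (TensorProduct.assoc ℚ A A A).toLinearMap := by
  apply TensorProduct.ext_threefold
  intro p q r
  simp [mK, mΦ, mB, mΦB, TensorProduct.assoc_tmul, Prod.ext_iff]
  ring_nf
  exact ⟨trivial, trivial⟩

end
end

section
/- With m, Δ, m_Φ, Δ_Φ as in Lee's construction on A = ℚ𝟏 ⊕ ℚ𝐱, the identity Δ ∘ m_Φ + Δ_Φ ∘ m = (m ⊗ id) ∘ (id ⊗ Δ_Φ) + (m_Φ ⊗ id) ∘ (id ⊗ Δ) holds as maps A⊗A → A⊗A. -/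
open TensorProduct

noncomputable section

set_option synthInstance.maxHeartbeats 1000000 in
set_option maxHeartbeats 2000000 in
/-- `Δ ∘ m_Φ + Δ_Φ ∘ m = (m ⊗ id) ∘ (id ⊗ Δ_Φ) + (m_Φ ⊗ id) ∘ (id ⊗ Δ)`
as maps `A ⊗ A → A ⊗ A`. -/
theorem stmt5 :
    ΔK ∘ₗ mΦ + ΔΦ ∘ₗ mK =
      LinearMap.rTensor A mK ∘ₗ (TensorProduct.assoc ℚ A A A).symm.toLinearMap ∘ₗ
          LinearMap.lTensor A ΔΦ +
        LinearMap.rTensor A mΦ ∘ₗ (TensorProduct.assoc ℚ A A A).symm.toLinearMap ∘ₗ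
          LinearMap.lTensor A ΔK := by
  apply TensorProduct.ext'
  intro p q
  obtain ⟨a, b⟩ := p
  obtain ⟨c, d⟩ := q
  have hp : ((a,b) : A) = a • one1 + b • xx := by simp [one1, xx, Prod.ext_iff]
  have hq : ((c,d) : A) = c • one1 + d • xx := by simp [one1, xx, Prod.ext_iff]
  rw [hp, hq]
  simp [mK, mΦ, ΔK, ΔΦ, mB, mΦB, one1, xx, TensorProduct.smul_tmul', TensorProduct.tmul_add,
    TensorProduct.add_tmul, TensorProduct.smul_tmul, TensorProduct.assoc_symm_tmul, smul_smul]
  have key : ∀ p q : ℚ, ((p, q) : A) = p • one1 + q • xx := by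
    intro p q; simp [one1, xx, Prod.ext_iff]
  simp only [key, TensorProduct.add_tmul, TensorProduct.tmul_add,
    ← TensorProduct.smul_tmul', TensorProduct.tmul_smul]
  module

end
end

section
/- Let T be a finite tree with n ≥ 2 vertices, and suppose each edge may be marked at either or both of its endpoints subject to: (i) every edge incident to a leaf is marked at the leaf end, and (ii) every non-leaf vertex has at least two incident edge-ends marked at it. Then some edge incident to a leaf is marked at both of its endpoints. -/
open Finset

/-- Double counting incidences `(v, s)` with `v ∈ s ∈ E` and `Q s v`. -/
lemma stmt11_dc {V : Type*} [Fintype V] [DecidableEq V] (E : Finset (Sym2 V))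
    (Q : Sym2 V → V → Prop) [∀ s v, Decidable (Q s v)] :
    ∑ v : V, (E.filter (fun s => v ∈ s ∧ Q s v)).card
      = ∑ s ∈ E, (Finset.univ.filter (fun v => v ∈ s ∧ Q s v)).card := by
  simp_rw [Finset.card_filter]
  exact Finset.sum_comm

/-- let `T` be a finite tree with at least 2 vertices, and let `M s v`
mean "the edge `s` is marked at its endpoint `v`". Suppose (i) every edge incident
to a leaf is marked at the leaf end, and (ii) every non-leaf vertex has at least two
incident edge-ends marked at it. Then some edge incident to a leaf is marked at both
of its endpoints. -/
theorem stmt11 {V : Type*} [Fintype V] [DecidableEq V]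
    (T : SimpleGraph V) [DecidableRel T.Adj]
    (htree : T.IsTree) (hcard : 2 ≤ Fintype.card V)
    (M : Sym2 V → V → Prop) [∀ s v, Decidable (M s v)]
    (hleaf : ∀ s ∈ T.edgeFinset, ∀ v ∈ s, T.degree v = 1 → M s v)
    (hinner : ∀ v : V, T.degree v ≠ 1 →
      2 ≤ ((T.incidenceFinset v).filter (fun s => M s v)).card) :
    ∃ s ∈ T.edgeFinset, (∃ v ∈ s, T.degree v = 1) ∧ ∀ v ∈ s, M s v := by
  by_contra hcon
  push_neg at hcon
  -- notation
  set E := T.edgeFinset with hE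
  set L := Finset.univ.filter (fun v => T.degree v = 1) with hL
  have hfilter : ∀ v : V, (T.incidenceFinset v).filter (fun s => M s v)
      = E.filter (fun s => v ∈ s ∧ M s v) := by
    intro v
    ext s
    simp only [SimpleGraph.incidenceFinset_eq_filter, Finset.mem_filter, and_assoc, hE,
      SimpleGraph.mem_edgeFinset]
  -- per-edge upper bound: marked ends + leaf ends ≤ 2
  have hedge : ∀ s ∈ E, (Finset.univ.filter (fun v => v ∈ s ∧ M s v)).card
      + (Finset.univ.filter (fun v => v ∈ s ∧ T.degree v = 1)).card ≤ 2 := by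
    intro s hs
    induction s using Sym2.ind with
    | _ a b =>
      have hadj : T.Adj a b := by rwa [SimpleGraph.mem_edgeFinset, SimpleGraph.mem_edgeSet] at hs
      have hab : a ≠ b := hadj.ne
      have hsub : ∀ (P : V → Prop) [DecidablePred P],
          Finset.univ.filter (fun v => v ∈ s(a, b) ∧ P v) ⊆ ({a, b} : Finset V) := by
        intro P _ v hv
        simp only [Finset.mem_filter, Sym2.mem_iff] at hv
        simp [hv.2.1]
      have hcard2 : ({a, b} : Finset V).card = 2 := Finset.card_pair hab
      by_cases hpend : ∃ v ∈ s(a, b), T.degree v = 1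
      · -- pendent edge: some end unmarked, and not both ends are leaves
        obtain ⟨v₀, hv₀s, hv₀M⟩ := hcon s(a, b) hs hpend
        -- marked ends ⊆ {a,b} \ {v₀}
        have h1 : (Finset.univ.filter (fun v => v ∈ s(a, b) ∧ M s(a, b) v)).card ≤ 1 := by
          have hsub' : Finset.univ.filter (fun v => v ∈ s(a, b) ∧ M s(a, b) v)
              ⊆ ({a, b} : Finset V).erase v₀ := by
            intro v hv
            simp only [Finset.mem_filter, Finset.mem_univ, true_and] at hv
            refine Finset.mem_erase.2 ⟨?_, ?_⟩
            · rintro rfl; exact hv₀M hv.2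
            · rcases Sym2.mem_iff.mp hv.1 with rfl | rfl <;> simp
          calc (Finset.univ.filter (fun v => v ∈ s(a, b) ∧ M s(a, b) v)).card
              ≤ (({a, b} : Finset V).erase v₀).card := Finset.card_le_card hsub'
            _ = 1 := by
                rw [Finset.card_erase_of_mem, hcard2]
                rcases Sym2.mem_iff.mp hv₀s with rfl | rfl <;> simp
        -- not both ends leaves (else hleaf would mark everything, contradicting hv₀M)
        have hnot2 : ¬ (T.degree a = 1 ∧ T.degree b = 1) := by
          rintro ⟨ha1, hb1⟩
          apply hv₀M
          apply hleaf _ hs _ hv₀s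
          rcases Sym2.mem_iff.mp hv₀s with rfl | rfl <;> assumption
        have h2 : (Finset.univ.filter (fun v => v ∈ s(a, b) ∧ T.degree v = 1)).card ≤ 1 := by
          by_contra hgt
          push_neg at hgt
          have hasub := hsub (fun v => T.degree v = 1)
          have : Finset.univ.filter (fun v => v ∈ s(a, b) ∧ T.degree v = 1)
              = ({a, b} : Finset V) := Finset.eq_of_subset_of_card_le hasub (by omega)
          have haa : a ∈ Finset.univ.filter (fun v => v ∈ s(a, b) ∧ T.degree v = 1) := by
            rw [this]; simp
          have hbb : b ∈ Finset.univ.filter (fun v => v ∈ s(a, b) ∧ T.degree v = 1) := by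
            rw [this]; simp
          simp only [Finset.mem_filter] at haa hbb
          exact hnot2 ⟨haa.2.2, hbb.2.2⟩
        omega
      · -- non-pendent: leaf-end count is 0, marked ends ≤ 2
        push_neg at hpend
        have h2 : (Finset.univ.filter (fun v => v ∈ s(a, b) ∧ T.degree v = 1)).card = 0 := by
          rw [Finset.card_eq_zero, Finset.filter_eq_empty_iff]
          intro v _
          rintro ⟨hvs, hv1⟩
          exact hpend v hvs hv1
        have h1 := Finset.card_le_card (hsub (fun v => M s(a, b) v))
        omega
  -- lower bound on the vertex side
  have hleafcount : ∀ v ∈ L, 1 ≤ (E.filter (fun s => v ∈ s ∧ M s v)).card := by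
    intro v hv
    rw [← hfilter]
    have hdeg : T.degree v = 1 := by simpa [hL] using hv
    have hpos : 0 < (T.incidenceFinset v).card := by
      rw [SimpleGraph.card_incidenceFinset_eq_degree, hdeg]; omega
    obtain ⟨e, he⟩ := Finset.card_pos.mp hpos
    have he' : e ∈ T.incidenceSet v := by rwa [SimpleGraph.mem_incidenceFinset] at he
    have hM : M e v := hleaf e (SimpleGraph.mem_edgeFinset.mpr he'.1) v he'.2 hdeg
    exact Finset.card_pos.mpr ⟨e, Finset.mem_filter.mpr ⟨he, hM⟩⟩
  have hvertex : 2 * Fintype.card V - L.card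
      ≤ ∑ v : V, (E.filter (fun s => v ∈ s ∧ M s v)).card := by
    have hsplit := Finset.sum_filter_add_sum_filter_not Finset.univ
      (fun v => T.degree v = 1) (fun v => (E.filter (fun s => v ∈ s ∧ M s v)).card)
    have h1 : L.card * 1 ≤ ∑ v ∈ L, (E.filter (fun s => v ∈ s ∧ M s v)).card := by
      have := Finset.card_nsmul_le_sum L (fun v => (E.filter (fun s => v ∈ s ∧ M s v)).card)
        1 hleafcount
      simpa [smul_eq_mul] using this
    have h2 : (Finset.univ.filter (fun v => ¬ T.degree v = 1)).card * 2
        ≤ ∑ v ∈ Finset.univ.filter (fun v => ¬ T.degree v = 1),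
            (E.filter (fun s => v ∈ s ∧ M s v)).card := by
      have := Finset.card_nsmul_le_sum (Finset.univ.filter (fun v => ¬ T.degree v = 1))
        (fun v => (E.filter (fun s => v ∈ s ∧ M s v)).card) 2 (by
          intro v hv
          show 2 ≤ (E.filter (fun s => v ∈ s ∧ M s v)).card
          rw [← hfilter]
          exact hinner v (by simpa using (Finset.mem_filter.mp hv).2))
      simpa [smul_eq_mul] using this
    have hLc : (Finset.univ.filter (fun v => ¬ T.degree v = 1)).card
        = Fintype.card V - L.card := by
      rw [hL, Finset.filter_not, Finset.card_sdiff_of_subset (Finset.filter_subset _ _)]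
      rfl
    have hLle : L.card ≤ Fintype.card V := Finset.card_le_univ _
    rw [← hL] at hsplit
    omega
  -- the leaf-end double count equals L.card
  have hleafdc : ∑ v : V, (E.filter (fun s => v ∈ s ∧ T.degree v = 1)).card = L.card := by
    have : ∀ v : V, (E.filter (fun s => v ∈ s ∧ T.degree v = 1)).card
        = if T.degree v = 1 then 1 else 0 := by
      intro v
      by_cases hv : T.degree v = 1
      · have heq : E.filter (fun s => v ∈ s ∧ T.degree v = 1) = T.incidenceFinset v := by
          rw [SimpleGraph.incidenceFinset_eq_filter]
          ext s; simp [Finset.mem_filter, hv, hE, SimpleGraph.mem_edgeFinset]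
        rw [if_pos hv, heq, SimpleGraph.card_incidenceFinset_eq_degree, hv]
      · rw [if_neg hv, Finset.card_eq_zero, Finset.filter_eq_empty_iff]
        rintro s _ ⟨_, h1⟩
        exact hv h1
    rw [Finset.sum_congr rfl (fun v _ => this v), hL, Finset.card_filter]
  -- combine
  have hdcM := stmt11_dc E M
  have hdcL := stmt11_dc E (fun _ v => T.degree v = 1)
  have hEcard : E.card + 1 = Fintype.card V := htree.card_edgeFinset
  have hsum : ∑ s ∈ E, ((Finset.univ.filter (fun v => v ∈ s ∧ M s v)).card
      + (Finset.univ.filter (fun v => v ∈ s ∧ T.degree v = 1)).card) ≤ 2 * E.card := by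
    calc ∑ s ∈ E, ((Finset.univ.filter (fun v => v ∈ s ∧ M s v)).card
        + (Finset.univ.filter (fun v => v ∈ s ∧ T.degree v = 1)).card)
        ≤ ∑ _s ∈ E, 2 := Finset.sum_le_sum hedge
      _ = 2 * E.card := by rw [Finset.sum_const]; ring
  rw [Finset.sum_add_distrib] at hsum
  rw [hdcM] at hvertex
  rw [hdcL] at hleafdc
  have hLle : L.card ≤ Fintype.card V := Finset.card_le_univ _
  omega
end
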